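/- In the setting of the copula construction H(x) = C(D₁(F₁(x₁),F₁(x_{p+1})),...,D_p(F_p(x_p),F_p(x_{2p}))): if H is a distribution function and each 2-copula D_i is symmetric (D_i(u,v) = D_i(v,u)), then H(f(x)) = H(x) for all swap maps f ∈ F and x ∈ ℝ^{2p}, hence λ_H is F-invariant and λ_H ∈ Λ. -/

import Mathlib

open MeasureTheory Set ENNReal

/-- The swap map `f_S` on `ℝ^p × ℝ^p`. -/
noncomputable def swapMap (p : ℕ) (S : Finset (Fin p)) :
    ((Fin p → ℝ) × (Fin p → ℝ)) → ((Fin p → ℝ) × (Fin p → ℝ)) :=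
  fun z => (fun i => if i ∈ S then z.2 i else z.1 i,
            fun i => if i ∈ S then z.1 i else z.2 i)

/-- An `n`-copula. -/
def IsCopula {n : ℕ} (C : (Fin n → ℝ) → ℝ) : Prop :=
  ∃ μ : Measure (Fin n → ℝ), IsProbabilityMeasure μ ∧
    (∀ i, μ.map (fun y => y i) = volume.restrict (Set.Ioo (0:ℝ) 1)) ∧
    ∀ u, C u = (μ {y | ∀ i, y i ≤ u i}).toReal

/-- A `2`-copula, in curried form. -/
def IsCopula2 (D : ℝ → ℝ → ℝ) : Prop :=
  ∃ μ : Measure (ℝ × ℝ), IsProbabilityMeasure μ ∧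
    μ.map Prod.fst = volume.restrict (Set.Ioo (0:ℝ) 1) ∧
    μ.map Prod.snd = volume.restrict (Set.Ioo (0:ℝ) 1) ∧
    ∀ u v, D u v = (μ {y | y.1 ≤ u ∧ y.2 ≤ v}).toReal

/-!
Symmetry of each `D i` makes `H` invariant under every swap map. Finite measures on
`ℝ^p × ℝ^p` are determined by their values on the lower orthants `Iic z`, on which `λ_H` is
given by `H`, so `λ_H` is swap invariant as well. For the first marginal, copulas are Lipschitz
(each coordinate has a uniform marginal) and `D i u 1 = u`; letting the last `p` coordinates tend
to `+∞` in `H` therefore yields `C (F₁ x₁, …, F_p x_p)`, which is the distribution function of `X`.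
-/

open MeasurableSpace Filter Topology ProbabilityTheory

lemma Set.image_univ_pi_range_Iic {ι : Type*} {α : ι → Type*} [∀ i, Preorder (α i)] :
    (pi univ '' pi univ fun i => range (Iic : α i → Set (α i))) =
      range (Iic : (∀ i, α i) → _) := by
  ext s
  constructor
  · rintro ⟨t, ht, rfl⟩
    choose a ha using fun i => ht i (mem_univ i)
    exact ⟨a, by simp only [← pi_univ_Iic, ha]⟩
  · rintro ⟨a, rfl⟩
    exact ⟨fun i => Iic (a i), fun i _ => mem_range_self (a i), pi_univ_Iic a⟩

lemma Set.image2_prod_range_Iic {α β : Type*} [Preorder α] [Preorder β] :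
    image2 (· ×ˢ ·) (range (Iic : α → Set α)) (range (Iic : β → Set β)) =
      range (Iic : α × β → _) := by
  ext s
  constructor
  · rintro ⟨_, ⟨a, rfl⟩, _, ⟨b, rfl⟩, rfl⟩
    exact ⟨(a, b), (Iic_prod_Iic a b).symm⟩
  · rintro ⟨c, rfl⟩
    exact ⟨_, mem_range_self c.1, _, mem_range_self c.2, (Iic_prod_eq c).symm⟩

section Pi

variable {ι : Type*} [Finite ι] {α : ι → Type*} [∀ i, Preorder (α i)]

lemma IsCountablySpanning.range_Iic_pi
    (h : ∀ i, IsCountablySpanning (range (Iic : α i → Set (α i)))) :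
    IsCountablySpanning (range (Iic : (∀ i, α i) → _)) :=
  image_univ_pi_range_Iic (α := α) ▸ IsCountablySpanning.pi h

lemma MeasurableSpace.pi_eq_generateFrom_range_Iic [m : ∀ i, MeasurableSpace (α i)]
    (hgen : ∀ i, m i = generateFrom (range Iic))
    (hspan : ∀ i, IsCountablySpanning (range (Iic : α i → Set (α i)))) :
    MeasurableSpace.pi = generateFrom (range (Iic : (∀ i, α i) → _)) := by
  rw [← generateFrom_eq_pi (fun i => (hgen i).symm) hspan, image_univ_pi_range_Iic]

end Pi

lemma MeasurableSpace.prod_eq_generateFrom_range_Iic {α β : Type*} [Preorder α] [Preorder β]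
    [mα : MeasurableSpace α] [mβ : MeasurableSpace β]
    (hα : mα = generateFrom (range Iic)) (hβ : mβ = generateFrom (range Iic))
    (hα' : IsCountablySpanning (range (Iic : α → Set α)))
    (hβ' : IsCountablySpanning (range (Iic : β → Set β))) :
    Prod.instMeasurableSpace = generateFrom (range (Iic : α × β → _)) := by
  rw [← image2_prod_range_Iic, ← generateFrom_prod_eq hα' hβ', ← hα, ← hβ]

lemma Real.isCountablySpanning_range_Iic : IsCountablySpanning (range (Iic : ℝ → Set ℝ)) :=
  ⟨fun n : ℕ => Iic (n : ℝ), fun _ => mem_range_self _,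
    iUnion_eq_univ_iff.2 fun x => (exists_nat_ge x).imp fun _ => mem_Iic.2⟩

lemma Real.measurableSpace_pi_eq_generateFrom_range_Iic {ι : Type*} [Finite ι] :
    (MeasurableSpace.pi : MeasurableSpace (ι → ℝ)) = generateFrom (range Iic) :=
  pi_eq_generateFrom_range_Iic
    (fun _ => BorelSpace.measurable_eq.trans (borel_eq_generateFrom_Iic ℝ))
    fun _ => isCountablySpanning_range_Iic

lemma Real.measurableSpace_prod_pi_eq_generateFrom_range_Iic {ι : Type*} [Finite ι] :
    (Prod.instMeasurableSpace : MeasurableSpace ((ι → ℝ) × (ι → ℝ))) =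
      generateFrom (range Iic) :=
  have hspan := IsCountablySpanning.range_Iic_pi fun (_ : ι) => isCountablySpanning_range_Iic
  prod_eq_generateFrom_range_Iic measurableSpace_pi_eq_generateFrom_range_Iic
    measurableSpace_pi_eq_generateFrom_range_Iic hspan hspan

lemma MeasureTheory.Measure.ext_of_Iic_of_generateFrom {α : Type*} [SemilatticeInf α]
    [m : MeasurableSpace α] (hgen : m = generateFrom (range Iic)) {μ ν : Measure α}
    [IsFiniteMeasure μ] (huniv : μ univ = ν univ) (h : ∀ a, μ (Iic a) = ν (Iic a)) : μ = ν :=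
  ext_of_generate_finite _ hgen
    (by rintro _ ⟨a, rfl⟩ _ ⟨b, rfl⟩ -; exact ⟨a ⊓ b, Iic_inter_Iic.symm⟩)
    (forall_mem_range.2 h) huniv

lemma ProbabilityTheory.cdf_map_eval {ι : Type*} (μ : Measure (ι → ℝ)) [IsProbabilityMeasure μ]
    (i : ι) (t : ℝ) : cdf (μ.map (· i)) t = μ.real {x | x i ≤ t} := by
  have := Measure.isProbabilityMeasure_map (μ := μ) (measurable_pi_apply i).aemeasurable
  rw [cdf_eq_real, map_measureReal_apply (measurable_pi_apply i) measurableSet_Iic]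
  rfl

lemma tendsto_measureReal_Iic_prod_const {α ι : Type*} [Preorder α] [Finite ι]
    [MeasurableSpace (α × (ι → ℝ))] (μ : Measure (α × (ι → ℝ))) [IsFiniteMeasure μ] (x : α) :
    Tendsto (fun t : ℝ => μ.real (Iic (x, fun _ => t))) atTop
      (𝓝 (μ.real (Prod.fst ⁻¹' Iic x))) := by
  have hmono : Monotone fun t : ℝ => Iic (x, fun _ : ι => t) :=
    fun s t hst => Iic_subset_Iic.2 ⟨le_rfl, fun _ => hst⟩
  have hunion : (⋃ t : ℝ, Iic (x, fun _ : ι => t)) = Prod.fst ⁻¹' Iic x := by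
    ext w
    simp only [mem_iUnion, mem_Iic, mem_preimage]
    refine ⟨fun ⟨_, h, _⟩ => h, fun h => ?_⟩
    obtain ⟨t, ht⟩ := (finite_range w.2).bddAbove
    exact ⟨t, h, fun i => ht (mem_range_self i)⟩
  rw [← hunion]
  exact (ENNReal.tendsto_toReal (measure_ne_top μ _)).comp (tendsto_measure_iUnion_atTop hmono)

section Lipschitz

variable {α ι : Type*} [MeasurableSpace α] [Fintype ι] {μ : Measure α} [IsFiniteMeasure μ]
  {g : ι → α → ℝ}

lemma measureReal_setOf_forall_le_le_add (hg : ∀ i, Measurable (g i))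
    (hmarg : ∀ i, μ.map (g i) ≤ volume) (u v : ι → ℝ) :
    μ.real {y | ∀ i, g i y ≤ u i} ≤ μ.real {y | ∀ i, g i y ≤ v i} + ∑ i, |u i - v i| := by
  have hcover : {y | ∀ i, g i y ≤ u i} ⊆
      {y | ∀ i, g i y ≤ v i} ∪ ⋃ i, g i ⁻¹' Ioc (v i) (u i) := by
    intro y hy
    by_cases hv : ∀ i, g i y ≤ v i
    · exact Or.inl hv
    · obtain ⟨i, hi⟩ := not_forall.1 hv
      exact Or.inr (mem_iUnion.2 ⟨i, not_le.1 hi, hy i⟩)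
  have hstrip : ∀ i, μ.real (g i ⁻¹' Ioc (v i) (u i)) ≤ |u i - v i| := fun i => by
    rw [← map_measureReal_apply (hg i) measurableSet_Ioc]
    calc (μ.map (g i)).real (Ioc (v i) (u i))
        ≤ volume.real (Ioc (v i) (u i)) :=
          ENNReal.toReal_mono measure_Ioc_lt_top.ne (hmarg i _)
      _ = max (u i - v i) 0 := by rw [Real.volume_real_Ioc]
      _ ≤ |u i - v i| := max_le (le_abs_self _) (abs_nonneg _)
  calc μ.real {y | ∀ i, g i y ≤ u i}
      ≤ μ.real ({y | ∀ i, g i y ≤ v i} ∪ ⋃ i, g i ⁻¹' Ioc (v i) (u i)) :=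
        measureReal_mono hcover
    _ ≤ μ.real {y | ∀ i, g i y ≤ v i} + ∑ i, μ.real (g i ⁻¹' Ioc (v i) (u i)) :=
        (measureReal_union_le _ _).trans (by gcongr; exact measureReal_iUnion_fintype_le _)
    _ ≤ _ := by gcongr with i; exact hstrip i

lemma lipschitzWith_measureReal_setOf_forall_le (hg : ∀ i, Measurable (g i))
    (hmarg : ∀ i, μ.map (g i) ≤ volume) :
    LipschitzWith (Fintype.card ι) fun u : ι → ℝ => μ.real {y | ∀ i, g i y ≤ u i} := by
  refine LipschitzWith.of_dist_le_mul fun u v => ?_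
  have hsum : ∑ i, |u i - v i| ≤ Fintype.card ι * dist u v := by
    simpa [← Real.dist_eq] using
      Finset.sum_le_sum fun i (_ : i ∈ Finset.univ) => dist_le_pi_dist u v i
  rw [Real.dist_eq, abs_sub_le_iff, NNReal.coe_natCast]
  constructor
  · linarith [measureReal_setOf_forall_le_le_add hg hmarg u v]
  · have := measureReal_setOf_forall_le_le_add hg hmarg v u
    simp only [abs_sub_comm (v _)] at this
    linarith

end Lipschitz

lemma IsCopula.continuous {n : ℕ} {C : (Fin n → ℝ) → ℝ} (hC : IsCopula C) : Continuous C := by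
  obtain ⟨μ, _, hmarg, hform⟩ := hC
  rw [funext hform]
  exact (lipschitzWith_measureReal_setOf_forall_le (g := fun (i : Fin n) (y : Fin n → ℝ) => y i)
    measurable_pi_apply fun i => (hmarg i).trans_le Measure.restrict_le_self).continuous

lemma IsCopula2.continuous_uncurry {D : ℝ → ℝ → ℝ} (hD : IsCopula2 D) :
    Continuous (Function.uncurry D) := by
  obtain ⟨μ, _, hfst, hsnd, hform⟩ := hD
  have hK := (lipschitzWith_measureReal_setOf_forall_le (μ := μ) (g := ![Prod.fst, Prod.snd])
    (Fin.forall_fin_two.2 ⟨measurable_fst, measurable_snd⟩)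
    (Fin.forall_fin_two.2 ⟨hfst.trans_le Measure.restrict_le_self,
      hsnd.trans_le Measure.restrict_le_self⟩)).continuous
  have hD : Function.uncurry D =
      (fun u : Fin 2 → ℝ => μ.real {y | ∀ i, ![Prod.fst, Prod.snd] i y ≤ u i}) ∘
        fun x => ![x.1, x.2] := by
    funext ⟨a, b⟩
    simp [hform, Fin.forall_fin_two, measureReal_def]
  rw [hD]
  exact hK.comp (by fun_prop)

lemma IsCopula2.apply_one {D : ℝ → ℝ → ℝ} (hD : IsCopula2 D) {u : ℝ} (hu : u ∈ Icc 0 1) :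
    D u 1 = u := by
  obtain ⟨μ, _, hfst, hsnd, hform⟩ := hD
  have hsnd_le : μ (Prod.snd ⁻¹' Iic 1)ᶜ = 0 := by
    rw [← preimage_compl, compl_Iic, ← Measure.map_apply measurable_snd measurableSet_Ioi, hsnd,
      Measure.restrict_apply measurableSet_Ioi, Ioi_inter_Ioo]
    simp
  have hfst_le : μ (Prod.fst ⁻¹' Iic u) = ENNReal.ofReal u := by
    rw [← Measure.map_apply measurable_fst measurableSet_Iic, hfst,
      Measure.restrict_apply measurableSet_Iic]
    refine le_antisymm ?_ ?_
    · calc volume (Iic u ∩ Ioo 0 1) ≤ volume (Ioc 0 u) :=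
            measure_mono fun y hy => ⟨hy.2.1, hy.1⟩
        _ = ENNReal.ofReal u := by rw [Real.volume_Ioc, sub_zero]
    · calc ENNReal.ofReal u = volume (Ioo 0 u) := by rw [Real.volume_Ioo, sub_zero]
        _ ≤ volume (Iic u ∩ Ioo 0 1) :=
            measure_mono fun y hy => ⟨hy.2.le, hy.1, hy.2.trans_le hu.2⟩
  calc D u 1 = (μ (Prod.fst ⁻¹' Iic u ∩ Prod.snd ⁻¹' Iic 1)).toReal := hform u 1
    _ = u := by rw [measure_inter_conull hsnd_le, hfst_le, ENNReal.toReal_ofReal hu.1]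

lemma IsCopula.tendsto_comp_copula2 {γ : Type*} {n : ℕ} {C : (Fin n → ℝ) → ℝ} (hC : IsCopula C)
    {D : Fin n → ℝ → ℝ → ℝ} (hD : ∀ i, IsCopula2 (D i)) {u : Fin n → ℝ}
    (hu : ∀ i, u i ∈ Icc 0 1) {l : Filter γ} {v : γ → Fin n → ℝ}
    (hv : ∀ i, Tendsto (fun t => v t i) l (𝓝 1)) :
    Tendsto (fun t => C fun i => D i (u i) (v t i)) l (𝓝 (C u)) := by
  refine (hC.continuous.tendsto u).comp (tendsto_pi_nhds.2 fun i => ?_)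
  have h := ((hD i).continuous_uncurry.tendsto (u i, 1)).comp
    (tendsto_const_nhds.prodMk_nhds (hv i))
  rwa [Function.uncurry_apply_pair, (hD i).apply_one (hu i)] at h

section SwapMap

variable {p : ℕ} (S : Finset (Fin p))

lemma continuous_swapMap : Continuous (swapMap p S) := by
  unfold swapMap
  apply Continuous.prodMk <;> refine continuous_pi fun i => ?_ <;> split_ifs <;> fun_prop

lemma measurable_swapMap : Measurable (swapMap p S) :=
  (continuous_swapMap S).measurable

lemma swapMap_swapMap (z : (Fin p → ℝ) × (Fin p → ℝ)) : swapMap p S (swapMap p S z) = z := by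
  ext i <;> simp only [swapMap] <;> split_ifs <;> rfl

lemma monotone_swapMap : Monotone (swapMap p S) := by
  intro w z h
  refine ⟨fun i => ?_, fun i => ?_⟩ <;> simp only [swapMap] <;> split_ifs
  exacts [h.2 i, h.1 i, h.1 i, h.2 i]

lemma preimage_swapMap_Iic (z : (Fin p → ℝ) × (Fin p → ℝ)) :
    swapMap p S ⁻¹' Iic z = Iic (swapMap p S z) := by
  ext w
  exact ⟨fun h => swapMap_swapMap S w ▸ monotone_swapMap S h,
    fun h => swapMap_swapMap S z ▸ monotone_swapMap S h⟩

end SwapMap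

theorem copula_symmetric_knockoff_general (p : ℕ)
    (μX : Measure (Fin p → ℝ)) [IsProbabilityMeasure μX]
    (F : Fin p → ℝ → ℝ) (hF : ∀ i t, F i t = (μX {x | x i ≤ t}).toReal)
    (C : (Fin p → ℝ) → ℝ) (hC : IsCopula C)
    (hSklar : ∀ x : Fin p → ℝ, (μX {y | ∀ i, y i ≤ x i}).toReal = C (fun i => F i (x i)))
    (D : Fin p → ℝ → ℝ → ℝ) (hD : ∀ i, IsCopula2 (D i))
    (hsym : ∀ i u v, D i u v = D i v u)
    (H : ((Fin p → ℝ) × (Fin p → ℝ)) → ℝ)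
    (hH : ∀ z, H z = C (fun i => D i (F i (z.1 i)) (F i (z.2 i))))
    (lamH : Measure ((Fin p → ℝ) × (Fin p → ℝ))) [IsProbabilityMeasure lamH]
    (hCDF : ∀ z, H z =
      (lamH {w | (∀ i, w.1 i ≤ z.1 i) ∧ (∀ i, w.2 i ≤ z.2 i)}).toReal) :
    (∀ S : Finset (Fin p), ∀ z, H (swapMap p S z) = H z) ∧
    (∀ S : Finset (Fin p), lamH.map (swapMap p S) = lamH) ∧
    lamH.map Prod.fst = μX := by
  have hswap : ∀ S z, H (swapMap p S z) = H z := fun S z => by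
    simp only [hH, swapMap]
    congr 1
    funext i
    split_ifs
    exacts [hsym i _ _, rfl]
  refine ⟨hswap, fun S => ?_, ?_⟩
  · have := Measure.isProbabilityMeasure_map (μ := lamH) (measurable_swapMap S).aemeasurable
    refine Measure.ext_of_Iic_of_generateFrom
      Real.measurableSpace_prod_pi_eq_generateFrom_range_Iic (by simp) fun z => ?_
    rw [Measure.map_apply (measurable_swapMap S) measurableSet_Iic, preimage_swapMap_Iic,
      ← measureReal_eq_measureReal_iff]
    exact (hCDF _).symm.trans ((hswap S z).trans (hCDF z))
  · have := Measure.isProbabilityMeasure_map (μ := lamH) measurable_fst.aemeasurable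
    refine Measure.ext_of_Iic_of_generateFrom Real.measurableSpace_pi_eq_generateFrom_range_Iic
      (by simp) fun x => ?_
    have hcdf : ∀ i, F i = cdf (μX.map (· i)) := fun i => funext fun t => by
      rw [hF, cdf_map_eval]
      rfl
    have hlimC := hC.tendsto_comp_copula2 hD (u := fun i => F i (x i)) (v := fun t i => F i t)
      (fun i => hcdf i ▸ ⟨cdf_nonneg _ _, cdf_le_one _ _⟩) (fun i => hcdf i ▸ tendsto_cdf_atTop _)
    rw [← hSklar x] at hlimC
    rw [Measure.map_apply measurable_fst measurableSet_Iic, ← measureReal_eq_measureReal_iff]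
    exact tendsto_nhds_unique ((tendsto_measureReal_Iic_prod_const lamH x).congr
      fun t => (hCDF _).symm.trans (hH _)) hlimC

/-- If `H` (the copula construction) is a distribution function and each `D_i` is
symmetric, then `H ∘ f = H` for all swap maps `f`, hence `λ_H` is `F`-invariant with
first-`p` marginal `L(X)`, i.e. `λ_H ∈ Λ`. -/
theorem copula_symmetric_knockoff (p : ℕ) (hp : 2 ≤ p)
    (μX : Measure (Fin p → ℝ)) [IsProbabilityMeasure μX]
    (F : Fin p → ℝ → ℝ) (hF : ∀ i t, F i t = (μX {x | x i ≤ t}).toReal)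
    (C : (Fin p → ℝ) → ℝ) (hC : IsCopula C)
    (hSklar : ∀ x : Fin p → ℝ, (μX {y | ∀ i, y i ≤ x i}).toReal = C (fun i => F i (x i)))
    (D : Fin p → ℝ → ℝ → ℝ) (hD : ∀ i, IsCopula2 (D i))
    (hsym : ∀ i u v, D i u v = D i v u)
    (H : ((Fin p → ℝ) × (Fin p → ℝ)) → ℝ)
    (hH : ∀ z, H z = C (fun i => D i (F i (z.1 i)) (F i (z.2 i))))
    (lamH : Measure ((Fin p → ℝ) × (Fin p → ℝ))) [IsProbabilityMeasure lamH]
    (hCDF : ∀ z, H z =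
      (lamH {w | (∀ i, w.1 i ≤ z.1 i) ∧ (∀ i, w.2 i ≤ z.2 i)}).toReal) :
    (∀ S : Finset (Fin p), ∀ z, H (swapMap p S z) = H z) ∧
    (∀ S : Finset (Fin p), lamH.map (swapMap p S) = lamH) ∧
    lamH.map Prod.fst = μX :=
  copula_symmetric_knockoff_general p μX F hF C hC hSklar D hD hsym H hH lamH hCDF
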